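/- arXiv:2509.09407 — 2 statements merged into one kernel-verified Lean document; each statement's English description precedes it below -/
import Mathlib

section
/- Let G be a claw-free graph with maximum degree Δ(G) ≤ 4, let uv be an edge of G, and suppose u is not adjacent to any vertex of N(v)\{u}. Then the number of edges f of G that are disjoint from {u,v} and have at least one endpoint in N(u)\{v} is at most 6. -/
/-!
Since `u` has no neighbour in `N(v) \ {u}`, claw-freeness at `u` forces `S = N(u) \ {v}` to
be a clique, and `|S| ≤ 3`. A vertex of `S` is adjacent to `u` and to the rest of `S`, so it has
at most `4 - |S|` further neighbours; hence at most `C(|S|, 2) + |S| (4 - |S|) ≤ 6` edges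
avoiding `u` meet `S`.
-/

open SimpleGraph Finset

/-- A graph is claw-free if it has no induced subgraph isomorphic to `K_{1,3}`. -/
def ClawFree {V : Type} (G : SimpleGraph V) : Prop :=
  IsEmpty ((completeBipartiteGraph (Fin 1) (Fin 3)) ↪g G)

/-- Edge `e` sees edge `e'` if they are at distance two (share no endpoint and some
edge of `G` joins an endpoint of `e` to an endpoint of `e'`) or lie in a common triangle. -/
def Sees {V : Type} (G : SimpleGraph V) (e e' : Sym2 V) : Prop :=
  ((∀ x ∈ e, x ∉ e') ∧ ∃ x ∈ e, ∃ y ∈ e', G.Adj x y) ∨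
  (∃ x y z : V, G.Adj x y ∧ G.Adj y z ∧ G.Adj x z ∧
    e ∈ ({s(x, y), s(y, z), s(x, z)} : Set (Sym2 V)) ∧
    e' ∈ ({s(x, y), s(y, z), s(x, z)} : Set (Sym2 V)))

/-- An injective edge-coloring: distinct edges that see each other get distinct colors. -/
def IsInjEdgeColoring {V : Type} (G : SimpleGraph V) {k : ℕ}
    (φ : G.edgeSet → Fin k) : Prop :=
  ∀ e e' : G.edgeSet, (e : Sym2 V) ≠ (e' : Sym2 V) → Sees G e e' → φ e ≠ φ e'

/-- `G` has an injective `k`-edge-coloring. -/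
def HasInjColoring {V : Type} (G : SimpleGraph V) (k : ℕ) : Prop :=
  ∃ φ : G.edgeSet → Fin k, IsInjEdgeColoring G φ

/-- The injective chromatic index: the least `k` such that `G` has an injective
`k`-edge-coloring. -/
noncomputable def injChromIndex {V : Type} (G : SimpleGraph V) : ℕ :=
  sInf {k | HasInjColoring G k}

variable {V : Type} {G : SimpleGraph V}

theorem ClawFree.adj_or_adj_or_adj (hG : ClawFree G) {u a b c : V}
    (ha : G.Adj u a) (hb : G.Adj u b) (hc : G.Adj u c)
    (hab : a ≠ b) (hac : a ≠ c) (hbc : b ≠ c) : G.Adj a b ∨ G.Adj a c ∨ G.Adj b c := by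
  by_contra! h
  obtain ⟨h₁, h₂, h₃⟩ := h
  refine hG.elim' ⟨⟨Sum.elim (fun _ => u) ![a, b, c], ?_⟩, ?_⟩
  · refine Function.Injective.sumElim (fun _ _ _ => Subsingleton.elim _ _) ?_ ?_
    · intro i j hij
      fin_cases i <;> fin_cases j <;> simp_all
    · intro _ j
      fin_cases j <;> simp [ha.ne, hb.ne, hc.ne]
  · rintro (i | i) (j | j)
    · simp
    · fin_cases j <;> simp [ha, hb, hc]
    · fin_cases i <;> simp [ha.symm, hb.symm, hc.symm]
    · fin_cases i <;> fin_cases j <;>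
        simp [h₁, h₂, h₃, G.adj_comm b a, G.adj_comm c a, G.adj_comm c b]

theorem ClawFree.isClique_neighborSet_sdiff (hG : ClawFree G) {u v : V} (huv : G.Adj u v) :
    G.IsClique (G.neighborSet u \ insert v (G.neighborSet v)) := by
  rintro x ⟨hux, hx⟩ y ⟨huy, hy⟩ hxy
  simp only [Set.mem_insert_iff, mem_neighborSet, not_or] at hx hy
  simpa [hx.2, hy.2] using
    hG.adj_or_adj_or_adj huv hux huy (Ne.symm hx.1) (Ne.symm hy.1) hxy

namespace SimpleGraph

variable [Fintype V] [DecidableEq V] [DecidableRel G.Adj]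

theorem card_neighborFinset_sdiff_insert_le {u x : V} {S : Finset V} {d : ℕ}
    (hd : G.maxDegree ≤ d) (hS : G.IsClique S) (huS : ∀ y ∈ S, G.Adj u y) (hx : x ∈ S) :
    #(G.neighborFinset x \ insert u S) ≤ d - #S := by
  have hux : u ∉ S.erase x := fun h => G.irrefl (huS u (mem_of_mem_erase h))
  have hsub : insert u (S.erase x) ⊆ G.neighborFinset x := by
    intro y hy
    rw [mem_neighborFinset]
    obtain rfl | ⟨hyx, hyS⟩ := mem_insert.1 hy |>.imp_right mem_erase.1
    · exact (huS x hx).symm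
    · exact hS hx hyS (Ne.symm hyx)
  have hdisj : Disjoint (G.neighborFinset x \ insert u S) (insert u (S.erase x)) :=
    disjoint_sdiff_self_left.mono_right (insert_subset_insert u (erase_subset x S))
  have : #(G.neighborFinset x \ insert u S) + #S ≤ d :=
    calc #(G.neighborFinset x \ insert u S) + #S
        = #(G.neighborFinset x \ insert u S ∪ insert u (S.erase x)) := by
          rw [card_union_of_disjoint hdisj, card_insert_of_notMem hux, card_erase_add_one hx]
      _ ≤ #(G.neighborFinset x) := card_le_card (union_subset sdiff_subset hsub)
      _ ≤ d := (card_neighborFinset_eq_degree G x).trans_le ((G.degree_le_maxDegree x).trans hd)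
  omega

theorem card_edges_meeting_clique_le {u : V} {S : Finset V} {d : ℕ}
    (hd : G.maxDegree ≤ d) (hS : G.IsClique S) (huS : ∀ y ∈ S, G.Adj u y) :
    #{f ∈ G.edgeFinset | u ∉ f ∧ ∃ x ∈ f, x ∈ S} ≤ (#S).choose 2 + #S * (d - #S) := by
  have hsub : {f ∈ G.edgeFinset | u ∉ f ∧ ∃ x ∈ f, x ∈ S} ⊆
      S.offDiag.image Sym2.mk.uncurry ∪
        S.biUnion fun x => (G.neighborFinset x \ insert u S).image fun y => s(x, y) := by
    simp only [subset_iff, mem_filter, mem_edgeFinset]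
    rintro f ⟨hf, hu, x, hxf, hxS⟩
    obtain ⟨y, rfl⟩ := Sym2.mem_iff_exists.1 hxf
    rw [mem_edgeSet] at hf
    rw [mem_union]
    by_cases hyS : y ∈ S
    · exact Or.inl (mem_image.2 ⟨(x, y), mem_offDiag.2 ⟨hxS, hyS, hf.ne⟩, rfl⟩)
    · refine Or.inr (mem_biUnion.2 ⟨x, hxS, mem_image.2 ⟨y, ?_, rfl⟩⟩)
      have hyu : y ≠ u := by rintro rfl; exact hu (Sym2.mem_mk_right x y)
      simp [hf, hyS, hyu]
  calc _ ≤ _ := card_le_card hsub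
    _ ≤ #(S.offDiag.image Sym2.mk.uncurry) +
          ∑ x ∈ S, #((G.neighborFinset x \ insert u S).image fun y => s(x, y)) :=
      (card_union_le _ _).trans (Nat.add_le_add_left card_biUnion_le _)
    _ ≤ (#S).choose 2 + ∑ _x ∈ S, (d - #S) := by
      rw [Sym2.card_image_offDiag]
      gcongr with x hx
      exact card_image_le.trans (card_neighborFinset_sdiff_insert_le hd hS huS hx)
    _ = (#S).choose 2 + #S * (d - #S) := by rw [sum_const, smul_eq_mul]

end SimpleGraph

theorem stmt_2 {V : Type} [Fintype V] (G : SimpleGraph V) [DecidableRel G.Adj]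
    (hclaw : ClawFree G) (hΔ : G.maxDegree ≤ 4)
    (u v : V) (huv : G.Adj u v)
    (hu : ∀ w ∈ G.neighborSet v, w ≠ u → ¬G.Adj u w) :
    {f ∈ G.edgeSet | (u ∉ f ∧ v ∉ f) ∧ ∃ x ∈ f, G.Adj u x ∧ x ≠ v}.ncard ≤ 6 := by
  classical
  set S := (G.neighborFinset u).erase v
  have huS : ∀ x ∈ S, G.Adj u x := fun x hx =>
    (mem_neighborFinset G u x).1 (mem_of_mem_erase hx)
  have hS : G.IsClique (S : Set V) := by
    refine (hclaw.isClique_neighborSet_sdiff huv).subset fun x hx => ?_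
    have hux : G.Adj u x := huS x hx
    refine ⟨hux, ?_⟩
    rintro (rfl | hvx)
    · exact notMem_erase x _ hx
    · exact hu x hvx hux.ne.symm hux
  have hcard : #S ≤ 3 := by
    rw [card_erase_of_mem ((mem_neighborFinset G u v).2 huv), card_neighborFinset_eq_degree]
    have := (G.degree_le_maxDegree u).trans hΔ
    omega
  have hsub : {f ∈ G.edgeSet | (u ∉ f ∧ v ∉ f) ∧ ∃ x ∈ f, G.Adj u x ∧ x ≠ v} ⊆
      ↑({f ∈ G.edgeFinset | u ∉ f ∧ ∃ x ∈ f, x ∈ S} : Finset (Sym2 V)) := by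
    rintro f ⟨hf, ⟨hfu, -⟩, x, hxf, hux, hxv⟩
    simp only [coe_filter, mem_edgeFinset, Set.mem_ofPred_eq]
    exact ⟨hf, hfu, x, hxf, mem_erase.2 ⟨hxv, (mem_neighborFinset G u x).2 hux⟩⟩
  calc _ ≤ #({f ∈ G.edgeFinset | u ∉ f ∧ ∃ x ∈ f, x ∈ S} : Finset (Sym2 V)) :=
        (Set.ncard_le_ncard hsub (finite_toSet _)).trans_eq (Set.ncard_coe_finset _)
    _ ≤ (#S).choose 2 + #S * (4 - #S) := card_edges_meeting_clique_le hΔ hS huS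
    _ ≤ 6 := by interval_cases #S <;> decide
end

section
/- Let G be a claw-free graph with maximum degree Δ(G) ≤ 4, let v be a vertex of G with degree d(v) ≤ 3, and suppose the graph G − v obtained by deleting v admits an injective 13-edge-coloring. Then G admits an injective 13-edge-coloring. -/
open SimpleGraph

/-! Injective colorings of `G` are the proper colorings of the conflict graph on `E(G)`, in which
two edges are adjacent when they see each other. A coloring of `G - v` properly colors the edges
avoiding `v`, and the at most three edges at `v` can then be colored greedily from 13 colors,
because each of them sees at most 12 other edges.

For an edge `vx`, every edge it sees meets `W = (N(v) ∪ N(x)) \ {v, x}`. Counting incidences at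
`W`, each vertex of `W` carries at most 4 seen edges, and at most 3 if it is adjacent to only one
of `v`, `x` (its edge to that vertex is not seen), while seen edges inside `W` are counted twice.
Claw-freeness at `x` makes `N(x) \ N[v]` a clique, which supplies enough doubly counted edges to
bring the total down to 12. -/

open Finset

variable {V W : Type}

lemma Sees.symm {G : SimpleGraph V} {e e' : Sym2 V} (h : Sees G e e') : Sees G e' e := by
  rcases h with ⟨hd, p, hp, q, hq, hpq⟩ | ⟨x, y, z, hxy, hyz, hxz, he, he'⟩
  · exact Or.inl ⟨fun y hy hy' => hd y hy' hy, q, hq, p, hp, hpq.symm⟩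
  · exact Or.inr ⟨x, y, z, hxy, hyz, hxz, he', he⟩

def conflictGraph (G : SimpleGraph V) : SimpleGraph G.edgeSet where
  Adj e e' := (e : Sym2 V) ≠ e' ∧ Sees G e e'
  symm := ⟨fun _ _ h => ⟨h.1.symm, h.2.symm⟩⟩
  loopless := ⟨fun _ h => h.1 rfl⟩

@[simp]
lemma conflictGraph_adj {G : SimpleGraph V} {e e' : G.edgeSet} :
    (conflictGraph G).Adj e e' ↔ (e : Sym2 V) ≠ e' ∧ Sees G e e' :=
  Iff.rfl

lemma hasInjColoring_iff_colorable {G : SimpleGraph V} {k : ℕ} :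
    HasInjColoring G k ↔ (conflictGraph G).Colorable k :=
  ⟨fun ⟨φ, hφ⟩ => ⟨Coloring.mk φ fun h => hφ _ _ h.1 h.2⟩,
    fun ⟨c⟩ => ⟨c, fun _ _ hne hsees => c.valid (conflictGraph_adj.2 ⟨hne, hsees⟩)⟩⟩

theorem SimpleGraph.colorable_succ_of_precoloring {E : Type*} [Finite E] {H : SimpleGraph E}
    {k : ℕ} (S : Set E) (hdeg : ∀ e ∈ S, (H.neighborSet e).ncard ≤ k) (φ : E → Fin (k + 1))
    (hφ : ∀ ⦃e e'⦄, e ∉ S → e' ∉ S → H.Adj e e' → φ e ≠ φ e') : H.Colorable (k + 1) := by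
  classical
  induction S, S.toFinite using Set.Finite.induction_on generalizing φ with
  | empty => exact ⟨Coloring.mk φ fun h => hφ (Set.notMem_empty _) (Set.notMem_empty _) h⟩
  | @insert a S _ _ ih =>
    obtain ⟨c, hc⟩ : ∃ c, c ∉ φ '' H.neighborSet a := by
      by_contra! hall
      have hcard := (Set.ncard_image_le (f := φ) (H.neighborSet a).toFinite).trans
        (hdeg a (Set.mem_insert a S))
      rw [Set.eq_univ_of_forall hall, Set.ncard_univ, Nat.card_eq_fintype_card,
        Fintype.card_fin] at hcard
      omega
    refine ih (fun e he => hdeg e (Set.mem_insert_of_mem a he)) (Function.update φ a c) ?_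
    intro e e' he he' hadj
    by_cases hea : e = a <;> by_cases hea' : e' = a
    · exact absurd (hea.trans hea'.symm ▸ hadj) H.irrefl
    · subst hea
      rw [Function.update_self, Function.update_of_ne hea']
      exact fun h => hc ⟨e', hadj, h.symm⟩
    · subst hea'
      rw [Function.update_self, Function.update_of_ne hea]
      exact fun h => hc ⟨e, hadj.symm, h⟩
    · rw [Function.update_of_ne hea, Function.update_of_ne hea']
      exact hφ (by simp [hea, he]) (by simp [hea', he']) hadj

lemma exists_apex_of_mem_triangle {G : SimpleGraph V} {x y z u w : V} {e : Sym2 V}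
    (hxy : G.Adj x y) (hyz : G.Adj y z) (hxz : G.Adj x z)
    (huw : s(u, w) ∈ ({s(x, y), s(y, z), s(x, z)} : Set (Sym2 V)))
    (he : e ∈ ({s(x, y), s(y, z), s(x, z)} : Set (Sym2 V))) (hne : s(u, w) ≠ e) :
    ∃ t, G.Adj u t ∧ G.Adj w t ∧ (e = s(u, t) ∨ e = s(w, t)) := by
  simp only [Set.mem_insert_iff, Set.mem_singleton_iff] at huw he
  -- after the substitutions the apex is whichever of `x`, `y`, `z` is still in scope
  rcases he with rfl | rfl | rfl <;> rcases huw with h | h | h <;>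
    first
    | exact absurd h hne
    | rcases Sym2.eq_iff.1 h with ⟨rfl, rfl⟩ | ⟨rfl, rfl⟩ <;>
      first
      | (refine ⟨x, ?_, ?_, ?_⟩ <;> first | assumption | exact Adj.symm ‹_› | simp)
      | (refine ⟨y, ?_, ?_, ?_⟩ <;> first | assumption | exact Adj.symm ‹_› | simp)
      | (refine ⟨z, ?_, ?_, ?_⟩ <;> first | assumption | exact Adj.symm ‹_› | simp)

lemma Sees.of_embedding {H : SimpleGraph W} {G : SimpleGraph V} (f : H ↪g G) {e e' : Sym2 W}
    (hne : e ≠ e') (h : Sees G (e.map f) (e'.map f)) : Sees H e e' := by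
  rcases h with ⟨hd, p, hp, q, hq, hpq⟩ | ⟨x, y, z, hxy, hyz, hxz, he, he'⟩
  · obtain ⟨p, hp', rfl⟩ := Sym2.mem_map.1 hp
    obtain ⟨q, hq', rfl⟩ := Sym2.mem_map.1 hq
    exact Or.inl ⟨fun y hy hy' => hd (f y) (Sym2.mem_map.2 ⟨y, hy, rfl⟩)
      (Sym2.mem_map.2 ⟨y, hy', rfl⟩), p, hp', q, hq', f.map_adj_iff.1 hpq⟩
  · induction e using Sym2.ind with | _ a b => ?_
    have hinj := Sym2.map.injective f.injective
    rw [Sym2.map_mk] at he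
    have hab : G.Adj (f a) (f b) := by
      simp only [Set.mem_insert_iff, Set.mem_singleton_iff] at he
      rcases he with h | h | h <;> rw [← mem_edgeSet, h, mem_edgeSet] <;> assumption
    obtain ⟨t, hat, hbt, he't⟩ :=
      exists_apex_of_mem_triangle hxy hyz hxz he he' (by rwa [← Sym2.map_mk, hinj.ne_iff])
    obtain ⟨t, -, rfl⟩ :=
      Sym2.mem_map.1 (show t ∈ e'.map f by rcases he't with h | h <;> simp [h])
    refine Or.inr ⟨a, b, t, f.map_adj_iff.1 hab, f.map_adj_iff.1 hbt, f.map_adj_iff.1 hat,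
      by simp, ?_⟩
    rcases he't with h | h <;> rw [← Sym2.map_mk, hinj.eq_iff] at h <;> simp [h]

lemma HasInjColoring.exists_extension {H : SimpleGraph W} {G : SimpleGraph V} (f : H ↪g G)
    {k : ℕ} (hH : HasInjColoring H (k + 1)) :
    ∃ φ : G.edgeSet → Fin (k + 1), ∀ ⦃e e'⦄, e ∈ Set.range f.mapEdgeSet →
      e' ∈ Set.range f.mapEdgeSet → (conflictGraph G).Adj e e' → φ e ≠ φ e' := by
  obtain ⟨ψ, hψ⟩ := hH
  refine ⟨Function.extend f.mapEdgeSet ψ 0, ?_⟩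
  rintro _ _ ⟨a, rfl⟩ ⟨b, rfl⟩ ⟨hne, hsees⟩
  rw [f.mapEdgeSet.injective.extend_apply, f.mapEdgeSet.injective.extend_apply]
  have hne' : (a : Sym2 W) ≠ b := fun h => hne (by simp [h])
  exact hψ a b hne' (Sees.of_embedding f hne' hsees)

lemma mem_range_mapEdgeSet_induce {G : SimpleGraph V} {s : Set V} {e : G.edgeSet}
    (he : ∀ y ∈ (e : Sym2 V), y ∈ s) :
    e ∈ Set.range (Embedding.induce s : G.induce s ↪g G).mapEdgeSet := by
  obtain ⟨e, hG⟩ := e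
  induction e using Sym2.ind with | _ a b => ?_
  refine ⟨⟨s(⟨a, he a (by simp)⟩, ⟨b, he b (by simp)⟩), by simpa using hG⟩, ?_⟩
  ext
  simp

theorem Finset.card_biUnion_add_card_le_sum_card {ι α : Type*} [DecidableEq α] (s : Finset ι)
    (F : ι → Finset α) (Q : Finset α)
    (hQ : ∀ a ∈ Q, ∃ i ∈ s, ∃ j ∈ s, i ≠ j ∧ a ∈ F i ∧ a ∈ F j) :
    #(s.biUnion F) + #Q ≤ ∑ i ∈ s, #(F i) := by
  classical
  set U := s.biUnion F
  have hQU : Q ⊆ U := fun a ha => by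
    obtain ⟨i, hi, -, -, -, hai, -⟩ := hQ a ha
    exact mem_biUnion.2 ⟨i, hi, hai⟩
  have hcount : ∀ a ∈ U,
      1 + (if a ∈ Q then 1 else 0) ≤ #(s.bipartiteBelow (fun i a => a ∈ F i) a) := by
    intro a ha
    split_ifs with haQ
    · obtain ⟨i, hi, j, hj, hij, hai, haj⟩ := hQ a haQ
      exact one_lt_card.2 ⟨i, mem_filter.2 ⟨hi, hai⟩, j, mem_filter.2 ⟨hj, haj⟩, hij⟩
    · obtain ⟨i, hi, hai⟩ := mem_biUnion.1 ha
      exact card_pos.2 ⟨i, mem_filter.2 ⟨hi, hai⟩⟩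
  calc #U + #Q = ∑ a ∈ U, (1 + if a ∈ Q then 1 else 0) := by
        rw [sum_add_distrib, sum_ite_mem, inter_eq_right.2 hQU, card_eq_sum_ones,
          card_eq_sum_ones Q]
    _ ≤ ∑ a ∈ U, #(s.bipartiteBelow (fun i a => a ∈ F i) a) := sum_le_sum hcount
    _ = ∑ i ∈ s, #(U.bipartiteAbove (fun i a => a ∈ F i) i) :=
        (sum_card_bipartiteAbove_eq_sum_card_bipartiteBelow _).symm
    _ = ∑ i ∈ s, #(F i) := sum_congr rfl fun i hi => by
        rw [bipartiteAbove, filter_mem_eq_inter, inter_eq_right.2 (subset_biUnion_of_mem F hi)]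

lemma ClawFree.adj_of_not_adj {G : SimpleGraph V} (hclaw : ClawFree G) {x a b c : V}
    (hxa : G.Adj x a) (hxb : G.Adj x b) (hxc : G.Adj x c) (hab : a ≠ b) (hac : a ≠ c)
    (hbc : b ≠ c) (hab' : ¬G.Adj a b) (hac' : ¬G.Adj a c) : G.Adj b c := by
  by_contra hbc'
  let f : Fin 1 ⊕ Fin 3 → V := Sum.elim (fun _ => x) ![a, b, c]
  have hinj : Function.Injective f := by
    rintro (i | i) (j | j) h <;> fin_cases i <;> (try fin_cases j) <;>
      simp_all [f, hxa.ne, hxb.ne, hxc.ne, hxa.ne', hxb.ne', hxc.ne', hab.symm, hac.symm,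
        hbc.symm]
  have hadj : ∀ i j, G.Adj (f i) (f j) ↔ (completeBipartiteGraph (Fin 1) (Fin 3)).Adj i j := by
    rintro (i | i) (j | j) <;> fin_cases i <;> (try fin_cases j) <;>
      simp_all [f, hxa.symm, hxb.symm, hxc.symm, G.adj_comm b a, G.adj_comm c a, G.adj_comm c b]
  exact hclaw.false ⟨⟨f, hinj⟩, hadj _ _⟩

section SeenEdges

variable [Fintype V] {G : SimpleGraph V} [DecidableRel G.Adj] {v x w : V}

open Classical in
noncomputable def seenEdges (G : SimpleGraph V) [DecidableRel G.Adj] (e : Sym2 V) :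
    Finset (Sym2 V) :=
  {s ∈ G.edgeFinset | s ≠ e ∧ Sees G e s}

lemma mem_seenEdges {e s : Sym2 V} :
    s ∈ seenEdges G e ↔ s ∈ G.edgeSet ∧ s ≠ e ∧ Sees G e s := by
  simp [seenEdges]

lemma ncard_neighborSet_le_card_seenEdges (e : G.edgeSet) :
    ((conflictGraph G).neighborSet e).ncard ≤ #(seenEdges G e) := by
  rw [← Set.ncard_coe_finset]
  refine Set.ncard_le_ncard_of_injOn Subtype.val (fun s hs => ?_) Subtype.val_injective.injOn
  obtain ⟨hne, hsees⟩ := conflictGraph_adj.1 hs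
  exact mem_seenEdges.2 ⟨s.2, Ne.symm hne, hsees⟩

lemma exists_mem_adj_of_mem_seenEdges {s : Sym2 V} (hs : s ∈ seenEdges G s(v, x)) :
    ∃ w ∈ s, w ≠ v ∧ w ≠ x ∧ (G.Adj v w ∨ G.Adj x w) := by
  obtain ⟨-, hne, hsees⟩ := mem_seenEdges.1 hs
  rcases hsees with ⟨hd, p, hp, q, hq, hpq⟩ | ⟨a, b, c, hab, hbc, hac, hvx, hs'⟩
  · refine ⟨q, hq, ?_, ?_, ?_⟩
    · rintro rfl; exact hd q (by simp) hq
    · rintro rfl; exact hd q (by simp) hq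
    · rcases Sym2.mem_iff.1 hp with rfl | rfl <;> simp [hpq]
  · obtain ⟨t, hvt, hxt, hst⟩ := exists_apex_of_mem_triangle hab hbc hac hvx hs' hne.symm
    exact ⟨t, by rcases hst with rfl | rfl <;> simp, hvt.ne', hxt.ne', Or.inl hvt⟩

lemma notMem_seenEdges_of_not_adj (hwx : w ≠ x) (hxw : ¬G.Adj x w) :
    s(v, w) ∉ seenEdges G s(v, x) := by
  intro hs
  obtain ⟨-, hne, hsees⟩ := mem_seenEdges.1 hs
  rcases hsees with ⟨hd, -⟩ | ⟨a, b, c, hab, hbc, hac, hvx, hvw⟩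
  · exact hd v (by simp) (by simp)
  · obtain ⟨t, -, hxt, hwt⟩ := exists_apex_of_mem_triangle hab hbc hac hvx hvw hne.symm
    rcases hwt with h | h
    · rw [Sym2.congr_right] at h
      exact hxw (h ▸ hxt)
    · rcases Sym2.eq_iff.1 h with ⟨rfl, rfl⟩ | ⟨-, rfl⟩
      · exact hxw hxt
      · exact hwx rfl

lemma mem_seenEdges_of_adj {p q : V} (hpv : p ≠ v) (hpx : p ≠ x) (hqv : q ≠ v) (hqx : q ≠ x)
    (hxp : G.Adj x p) (hpq : G.Adj p q) : s(p, q) ∈ seenEdges G s(v, x) := by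
  refine mem_seenEdges.2 ⟨hpq, by simp [hpv, hpx], Or.inl ⟨?_, x, by simp, p, by simp, hxp⟩⟩
  simp [hpv.symm, hpx.symm, hqv.symm, hqx.symm]

end SeenEdges

section LocalCount

variable [Fintype V] [DecidableEq V] {G : SimpleGraph V} [DecidableRel G.Adj] {v x w : V}

lemma filter_seenEdges_subset_incidenceFinset (e : Sym2 V) (w : V) :
    {s ∈ seenEdges G e | w ∈ s} ⊆ G.incidenceFinset w := by
  intro s hs
  rw [incidenceFinset_eq_filter]
  simp only [mem_filter, mem_seenEdges, mem_edgeFinset] at hs ⊢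
  exact ⟨hs.1.1, hs.2⟩

lemma card_filter_seenEdges_le_degree (e : Sym2 V) (w : V) :
    #{s ∈ seenEdges G e | w ∈ s} ≤ G.degree w :=
  card_incidenceFinset_eq_degree G w ▸ card_le_card (filter_seenEdges_subset_incidenceFinset e w)

lemma card_filter_seenEdges_lt_degree (hvw : G.Adj v w) (hwx : w ≠ x) (hxw : ¬G.Adj x w) :
    #{s ∈ seenEdges G s(v, x) | w ∈ s} < G.degree w := by
  rw [← card_incidenceFinset_eq_degree]
  refine card_lt_card ((ssubset_iff_of_subset (filter_seenEdges_subset_incidenceFinset _ w)).2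
    ⟨s(v, w), ?_, by simp [notMem_seenEdges_of_not_adj hwx hxw]⟩)
  simpa [incidenceFinset_eq_filter] using hvw

lemma sum_card_filter_seenEdges_le (hΔ : G.maxDegree ≤ 4) :
    ∑ w ∈ (G.neighborFinset v).erase x ∪ (G.neighborFinset x).erase v,
        #{s ∈ seenEdges G s(v, x) | w ∈ s} ≤
      3 * #((G.neighborFinset v).erase x ∪ (G.neighborFinset x).erase v) +
        #((G.neighborFinset v).erase x ∩ (G.neighborFinset x).erase v) := by
  set A := (G.neighborFinset v).erase x
  set B := (G.neighborFinset x).erase v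
  have hdeg : ∀ w, G.degree w ≤ 4 := fun w => (G.degree_le_maxDegree w).trans hΔ
  have hone : ∀ w ∈ (A ∪ B) \ (A ∩ B), #{s ∈ seenEdges G s(v, x) | w ∈ s} ≤ 3 := by
    intro w hw
    simp only [A, B, mem_sdiff, mem_union, mem_inter, mem_erase, mem_neighborFinset] at hw
    have hvw_ne : G.Adj v w → w ≠ v := fun h => h.ne'
    have hxw_ne : G.Adj x w → w ≠ x := fun h => h.ne'
    by_cases hvw : G.Adj v w
    · have := card_filter_seenEdges_lt_degree hvw (by tauto) (by tauto)
      linarith [hdeg w]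
    · have := card_filter_seenEdges_lt_degree (v := x) (x := v) (by tauto) (by tauto) hvw
      rw [Sym2.eq_swap] at this
      linarith [hdeg w]
  rw [← sum_sdiff (inter_subset_union (s := A) (t := B)),
    ← card_sdiff_add_card_eq_card (inter_subset_union (s := A) (t := B))]
  have h3 := sum_le_sum hone
  have h4 := sum_le_sum fun w (_ : w ∈ A ∩ B) =>
    (card_filter_seenEdges_le_degree s(v, x) w).trans (hdeg w)
  simp only [sum_const, smul_eq_mul] at h3 h4
  linarith

lemma card_seenEdges_add_choose_le (hclaw : ClawFree G) (hvx : G.Adj v x) :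
    #(seenEdges G s(v, x)) +
        (#((G.neighborFinset x).erase v \ (G.neighborFinset v).erase x)).choose 2 ≤
      ∑ w ∈ (G.neighborFinset v).erase x ∪ (G.neighborFinset x).erase v,
        #{s ∈ seenEdges G s(v, x) | w ∈ s} := by
  set A := (G.neighborFinset v).erase x
  set B := (G.neighborFinset x).erase v
  have hcover : (A ∪ B).biUnion (fun w => {s ∈ seenEdges G s(v, x) | w ∈ s}) =
      seenEdges G s(v, x) := by
    refine Subset.antisymm (biUnion_subset.2 fun _ _ => filter_subset _ _) fun s hs => ?_
    obtain ⟨w, hws, hwv, hwx, hadj⟩ := exists_mem_adj_of_mem_seenEdges hs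
    refine mem_biUnion.2 ⟨w, ?_, mem_filter.2 ⟨hs, hws⟩⟩
    simp [A, B, hwv, hwx, hadj]
  have hclique : ∀ p ∈ B \ A, ∀ q ∈ B \ A, p ≠ q → s(p, q) ∈ seenEdges G s(v, x) := by
    intro p hp q hq hpq
    simp only [A, B, mem_sdiff, mem_erase, mem_neighborFinset, not_and] at hp hq
    have hpq' := hclaw.adj_of_not_adj hvx.symm hp.1.2 hq.1.2 (Ne.symm hp.1.1) (Ne.symm hq.1.1)
      hpq (fun h => hp.2 hp.1.2.ne' h) (fun h => hq.2 hq.1.2.ne' h)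
    exact mem_seenEdges_of_adj hp.1.1 hp.1.2.ne' hq.1.1 hq.1.2.ne' hp.1.2 hpq'
  have hB : B \ A ⊆ A ∪ B := sdiff_subset.trans subset_union_right
  have hbound := card_biUnion_add_card_le_sum_card (A ∪ B)
    (fun w => {s ∈ seenEdges G s(v, x) | w ∈ s}) ((B \ A).offDiag.image Sym2.mk.uncurry) <| by
      simp only [mem_image, mem_offDiag, Prod.exists, Function.uncurry_apply_pair]
      rintro _ ⟨p, q, ⟨hp, hq, hne⟩, rfl⟩
      exact ⟨p, hB hp, q, hB hq, hne, mem_filter.2 ⟨hclique p hp q hq hne, by simp⟩,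
        mem_filter.2 ⟨hclique p hp q hq hne, by simp⟩⟩
  rwa [hcover, Sym2.card_image_offDiag] at hbound

theorem card_seenEdges_le (hclaw : ClawFree G) (hΔ : G.maxDegree ≤ 4) (hvx : G.Adj v x)
    (hv : G.degree v ≤ 3) : #(seenEdges G s(v, x)) ≤ 12 := by
  have hcount := card_seenEdges_add_choose_le hclaw hvx
  have hsum := sum_card_filter_seenEdges_le (v := v) (x := x) hΔ
  set A := (G.neighborFinset v).erase x
  set B := (G.neighborFinset x).erase v
  have hA : #A + 1 ≤ 3 := by
    rw [card_erase_add_one (mem_neighborFinset _ _ _ |>.2 hvx), card_neighborFinset_eq_degree]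
    exact hv
  have hB : #B + 1 ≤ 4 := by
    rw [card_erase_add_one (mem_neighborFinset _ _ _ |>.2 hvx.symm),
      card_neighborFinset_eq_degree]
    exact (G.degree_le_maxDegree x).trans hΔ
  have hunion := card_union_add_card_inter A B
  have hdiff := card_sdiff_add_card_inter B A
  rw [inter_comm] at hdiff
  have hchoose : 2 * #(B \ A) ≤ (#(B \ A)).choose 2 + 3 := by
    have : #(B \ A) ≤ 3 := by omega
    interval_cases #(B \ A) <;> decide
  -- with `c = #(B \ A)` and `k = #(A ∩ B)`: `#seen ≤ 3 (#A + c) + k - c.choose 2 ≤ 3 #A + #B + 3`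
  omega

end LocalCount

theorem stmt_4 {V : Type} [Fintype V] (G : SimpleGraph V) [DecidableRel G.Adj]
    (hclaw : ClawFree G) (hΔ : G.maxDegree ≤ 4)
    (v : V) (hv : G.degree v ≤ 3)
    (h : HasInjColoring (G.induce ({v}ᶜ : Set V)) 13) :
    HasInjColoring G 13 := by
  classical
  obtain ⟨φ, hφ⟩ := h.exists_extension (Embedding.induce ({v}ᶜ : Set V))
  have hrange : ∀ e : G.edgeSet, v ∉ (e : Sym2 V) →
      e ∈ Set.range (Embedding.induce ({v}ᶜ : Set V) : G.induce {v}ᶜ ↪g G).mapEdgeSet :=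
    fun e hve => mem_range_mapEdgeSet_induce fun y hy (hyv : y = v) => hve (hyv ▸ hy)
  rw [hasInjColoring_iff_colorable]
  refine colorable_succ_of_precoloring {e | v ∈ (e : Sym2 V)} ?_ φ
    fun e e' he he' => hφ (hrange e he) (hrange e' he')
  rintro ⟨e, he⟩ (hve : v ∈ e)
  obtain ⟨x, rfl⟩ := Sym2.mem_iff_exists.1 hve
  exact (ncard_neighborSet_le_card_seenEdges _).trans (card_seenEdges_le hclaw hΔ he hv)
end
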